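/- Define, for w ∈ B_n, d(w) = Σ_{i∈[n], w(i)>i} (w(i)−i) + Σ_{i∈Neg(w)} |w(i)| + (o^B(w) − neg(w))/2. Then for every element w ∈ B_n and every reflection t of B_n, d(w) − dp(t) ≤ d(wt). -/

import Mathlib

open Equiv

/-- The defining condition for membership in the signed permutation group `B_n`:
a permutation of `ℤ` that commutes with negation and fixes every integer of
absolute value greater than `n`. -/
def IsSignedPerm (n : ℕ) (w : Equiv.Perm ℤ) : Prop :=
  (∀ i : ℤ, w (-i) = -(w i)) ∧ ∀ i : ℤ, (n : ℤ) < |i| → w i = i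

/-- The signed permutation group `B_n`, realized as a subgroup of the permutations of `ℤ`. -/
def BGroup (n : ℕ) : Subgroup (Equiv.Perm ℤ) where
  carrier := {w | IsSignedPerm n w}
  one_mem' := ⟨fun _ => rfl, fun _ _ => rfl⟩
  mul_mem' := by
    rintro a b ⟨ha1, ha2⟩ ⟨hb1, hb2⟩
    refine ⟨fun i => ?_, fun i hi => ?_⟩
    · simp only [Equiv.Perm.mul_apply, hb1, ha1]
    · simp only [Equiv.Perm.mul_apply, hb2 i hi, ha2 i hi]
  inv_mem' := by
    rintro a ⟨ha1, ha2⟩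
    refine ⟨fun i => a.injective ?_, fun i hi => a.injective ?_⟩
    · rw [ha1]; simp
    · rw [ha2 i hi]; simp

/-- `Neg(w)`: the set of positions `i ∈ [1, n]` carrying a negative entry. -/
noncomputable def negSet (n : ℕ) (w : Equiv.Perm ℤ) : Finset ℤ :=
  (Finset.Icc (1 : ℤ) (n : ℤ)).filter (fun i => w i < 0)

/-- `neg(w)`: the number of negative entries in the window of `w`. -/
noncomputable def negB (n : ℕ) (w : Equiv.Perm ℤ) : ℕ := (negSet n w).card

/-- `k` is a boundary of the type B block decomposition of `w`, i.e. `w` maps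
`{1, …, k}` onto `{±1, …, ±k}` (for `0 ≤ k ≤ n`). -/
def IsBdry (n : ℕ) (w : Equiv.Perm ℤ) (k : ℕ) : Prop :=
  k ≤ n ∧ ∀ i : ℤ, 1 ≤ i → i ≤ (k : ℤ) → |w i| ≤ (k : ℤ)

/-- The number of negative entries among the first `k` entries of the window of `w`. -/
noncomputable def negUpTo (w : Equiv.Perm ℤ) (k : ℕ) : ℕ :=
  ((Finset.Icc (1 : ℤ) (k : ℤ)).filter (fun i => w i < 0)).card

/-- `o^B(w)`: the number of blocks of the type B decomposition of `w` containing an odd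
number of negative entries.  A block is the interval between two consecutive boundaries,
and it is counted here via its right endpoint `k` (with left endpoint `k'` the previous
boundary); it has an odd number of negative entries exactly when the parities of
`negUpTo w k` and `negUpTo w k'` differ. -/
noncomputable def oB (n : ℕ) (w : Equiv.Perm ℤ) : ℕ :=
  {k : ℕ | 1 ≤ k ∧ IsBdry n w k ∧ ∃ k' < k, IsBdry n w k' ∧
    (∀ m : ℕ, k' < m → m < k → ¬ IsBdry n w m) ∧
    negUpTo w k % 2 ≠ negUpTo w k' % 2}.ncard

/-- The number of blocks of the type B decomposition of `w`
(each block is counted via its right endpoint, a nonzero boundary). -/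
noncomputable def numBlocksB (n : ℕ) (w : Equiv.Perm ℤ) : ℕ :=
  {k : ℕ | 1 ≤ k ∧ IsBdry n w k}.ncard

/-- The number of blocks of the type D decomposition of `w ∈ D_n`
(each block is counted via its right endpoint, a nonzero boundary at which the
number of preceding negative entries is even). -/
noncomputable def numBlocksD (n : ℕ) (w : Equiv.Perm ℤ) : ℕ :=
  {k : ℕ | 1 ≤ k ∧ IsBdry n w k ∧ Even (negUpTo w k)}.ncard

/-- `o^D(w)`: the number of type B blocks of `w` minus the number of type D blocks of `w`. -/
noncomputable def oD (n : ℕ) (w : Equiv.Perm ℤ) : ℤ :=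
  (numBlocksB n w : ℤ) - (numBlocksD n w : ℤ)

/-- `BReflDepth n t d` means that `t` is a reflection of `B_n` and `d` is its depth:
`t_{ij}` has depth `j - i`, `t_{-i,j}` has depth `i + j - 1`, and `t_{-i,i}` has depth `i`. -/
def BReflDepth (n : ℕ) (t : Equiv.Perm ℤ) (d : ℤ) : Prop :=
  (∃ i j : ℤ, 1 ≤ i ∧ i < j ∧ j ≤ (n : ℤ) ∧
    t = Equiv.swap i j * Equiv.swap (-i) (-j) ∧ d = j - i) ∨
  (∃ i j : ℤ, 1 ≤ i ∧ i < j ∧ j ≤ (n : ℤ) ∧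
    t = Equiv.swap (-i) j * Equiv.swap i (-j) ∧ d = i + j - 1) ∨
  (∃ i : ℤ, 1 ≤ i ∧ i ≤ (n : ℤ) ∧ t = Equiv.swap (-i) i ∧ d = i)

/-- `t` is a reflection of `B_n`. -/
def IsBRefl (n : ℕ) (t : Equiv.Perm ℤ) : Prop := ∃ d, BReflDepth n t d

/-- `DReflDepth n t d` means that `t` is a reflection of `D_n` and `d` is its depth:
`t_{ij}` has depth `j - i` and `t_{-i,j}` has depth `i + j - 2`. -/
def DReflDepth (n : ℕ) (t : Equiv.Perm ℤ) (d : ℤ) : Prop :=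
  (∃ i j : ℤ, 1 ≤ i ∧ i < j ∧ j ≤ (n : ℤ) ∧
    t = Equiv.swap i j * Equiv.swap (-i) (-j) ∧ d = j - i) ∨
  (∃ i j : ℤ, 1 ≤ i ∧ i < j ∧ j ≤ (n : ℤ) ∧
    t = Equiv.swap (-i) j * Equiv.swap i (-j) ∧ d = i + j - 2)

/-- `t` is a reflection of `D_n`. -/
def IsDRefl (n : ℕ) (t : Equiv.Perm ℤ) : Prop := ∃ d, DReflDepth n t d

/-- The depth of `w ∈ B_n`: the minimum, over all factorizations of `w` into reflections
of `B_n`, of the sum of the depths of the factors. -/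
noncomputable def depthB (n : ℕ) (w : Equiv.Perm ℤ) : ℤ :=
  sInf {m : ℤ | ∃ L : List (Equiv.Perm ℤ × ℤ),
    (∀ p ∈ L, BReflDepth n p.1 p.2) ∧ (L.map Prod.fst).prod = w ∧ (L.map Prod.snd).sum = m}

/-- The depth of `w ∈ D_n`: the minimum, over all factorizations of `w` into reflections
of `D_n`, of the sum of the depths of the factors. -/
noncomputable def depthD (n : ℕ) (w : Equiv.Perm ℤ) : ℤ :=
  sInf {m : ℤ | ∃ L : List (Equiv.Perm ℤ × ℤ),
    (∀ p ∈ L, DReflDepth n p.1 p.2) ∧ (L.map Prod.fst).prod = w ∧ (L.map Prod.snd).sum = m}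

/-- The Coxeter generating set `S_B = {t_{-1,1}, t_{12}, …, t_{n-1,n}}` of `B_n`. -/
def SB (n : ℕ) : Set (Equiv.Perm ℤ) :=
  {s | (1 ≤ n ∧ s = Equiv.swap (-1 : ℤ) 1) ∨
    ∃ i : ℤ, 1 ≤ i ∧ i + 1 ≤ (n : ℤ) ∧
      s = Equiv.swap i (i + 1) * Equiv.swap (-i) (-(i + 1))}

/-- The Coxeter generating set `S_D = {t_{-1,2}, t_{12}, …, t_{n-1,n}}` of `D_n`. -/
def SD (n : ℕ) : Set (Equiv.Perm ℤ) :=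
  {s | (2 ≤ n ∧ s = Equiv.swap (-1 : ℤ) 2 * Equiv.swap (1 : ℤ) (-2)) ∨
    ∃ i : ℤ, 1 ≤ i ∧ i + 1 ≤ (n : ℤ) ∧
      s = Equiv.swap i (i + 1) * Equiv.swap (-i) (-(i + 1))}

/-- The Coxeter length `ℓ_S(w)` of `w ∈ B_n`: the minimal length of a word in `S_B`
whose product is `w`. -/
noncomputable def lenB (n : ℕ) (w : Equiv.Perm ℤ) : ℕ :=
  sInf {r : ℕ | ∃ L : List (Equiv.Perm ℤ), (∀ s ∈ L, s ∈ SB n) ∧ L.prod = w ∧ L.length = r}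

/-- The Coxeter length `ℓ_S(w)` of `w ∈ D_n`: the minimal length of a word in `S_D`
whose product is `w`. -/
noncomputable def lenD (n : ℕ) (w : Equiv.Perm ℤ) : ℕ :=
  sInf {r : ℕ | ∃ L : List (Equiv.Perm ℤ), (∀ s ∈ L, s ∈ SD n) ∧ L.prod = w ∧ L.length = r}

/-- The reflection length `ℓ_T(w)` of `w ∈ B_n`: the minimal number of reflections
whose product is `w`. -/
noncomputable def ellTB (n : ℕ) (w : Equiv.Perm ℤ) : ℕ :=
  sInf {r : ℕ | ∃ L : List (Equiv.Perm ℤ), (∀ t ∈ L, IsBRefl n t) ∧ L.prod = w ∧ L.length = r}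

/-- `Σ_{i ∈ [n], w(i) > i} (w(i) - i)`. -/
noncomputable def excSum (n : ℕ) (w : Equiv.Perm ℤ) : ℤ :=
  ∑ i ∈ (Finset.Icc (1 : ℤ) (n : ℤ)).filter (fun i => i < w i), (w i - i)

/-- `Σ_{i ∈ Neg(w)} |w(i)|`. -/
noncomputable def negAbsSum (n : ℕ) (w : Equiv.Perm ℤ) : ℤ :=
  ∑ i ∈ (Finset.Icc (1 : ℤ) (n : ℤ)).filter (fun i => w i < 0), |w i|

/-- The even signed permutation group `D_n`, the set of elements of `B_n` with an even
number of negative window entries. -/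
def DSet (n : ℕ) : Set (Equiv.Perm ℤ) := {w | w ∈ BGroup n ∧ Even (negB n w)}

/-- The formula `d(w)` of Theorem 2.4 in type B. -/
noncomputable def dFormB (n : ℕ) (w : Equiv.Perm ℤ) : ℤ :=
  excSum n w + negAbsSum n w + ((oB n w : ℤ) - (negB n w : ℤ)) / 2

-- ===================== auxiliary development =====================
attribute [local instance 0] Classical.propDecidable

private lemma isBdry_zero (n : ℕ) (w : Perm ℤ) : IsBdry n w 0 :=
  ⟨Nat.zero_le n, fun i h1 h2 => absurd (h1.trans h2) (by norm_num)⟩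

private lemma bg_zero {n : ℕ} {w : Perm ℤ} (hw : w ∈ BGroup n) : w 0 = 0 := by
  have h := hw.1 0
  rw [neg_zero] at h
  omega

private lemma bg_ne_zero {n : ℕ} {w : Perm ℤ} (hw : w ∈ BGroup n) {x : ℤ} (hx : x ≠ 0) :
    w x ≠ 0 := by
  intro h
  exact hx (w.injective (h.trans (bg_zero hw).symm))

private lemma bg_abs_le {n : ℕ} {w : Perm ℤ} (hw : w ∈ BGroup n) {x : ℤ} (hx : |x| ≤ (n : ℤ)) :
    |w x| ≤ (n : ℤ) := by
  by_contra h
  push_neg at h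
  have h2 : w (w x) = w x := hw.2 (w x) h
  have h3 : w x = x := w.injective h2
  rw [h3] at h
  omega

private lemma isBdry_top {n : ℕ} {w : Perm ℤ} (hw : w ∈ BGroup n) : IsBdry n w n :=
  ⟨le_rfl, fun x h1 h2 => bg_abs_le hw (by rw [abs_of_pos (by omega)]; omega)⟩

private noncomputable def rhoB (n : ℕ) (w : Perm ℤ) (k : ℕ) : ℕ :=
  Nat.findGreatest (IsBdry n w) k

private lemma rhoB_le (n : ℕ) (w : Perm ℤ) (k : ℕ) : rhoB n w k ≤ k := Nat.findGreatest_le k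

private lemma rhoB_bdry (n : ℕ) (w : Perm ℤ) (k : ℕ) : IsBdry n w (rhoB n w k) :=
  Nat.findGreatest_spec (Nat.zero_le k) (isBdry_zero n w)

private lemma le_rhoB {n : ℕ} {w : Perm ℤ} {m k : ℕ} (h : IsBdry n w m) (hm : m ≤ k) :
    m ≤ rhoB n w k := Nat.le_findGreatest hm h

private lemma rhoB_mono (n : ℕ) (w : Perm ℤ) {k l : ℕ} (h : k ≤ l) : rhoB n w k ≤ rhoB n w l :=
  le_rhoB (rhoB_bdry n w k) ((rhoB_le n w k).trans h)

private lemma rhoB_eq_self {n : ℕ} {w : Perm ℤ} {k : ℕ} (h : IsBdry n w k) : rhoB n w k = k :=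
  le_antisymm (rhoB_le n w k) (le_rhoB h le_rfl)

private lemma rhoB_succ {n : ℕ} {w : Perm ℤ} {k : ℕ} (h : ¬ IsBdry n w (k+1)) :
    rhoB n w (k+1) = rhoB n w k := by
  rw [rhoB, rhoB, Nat.findGreatest_succ, if_neg h]

private lemma rhoB_zero (n : ℕ) (w : Perm ℤ) : rhoB n w 0 = 0 := rfl

private lemma rhoB_top {n : ℕ} {w : Perm ℤ} (hw : w ∈ BGroup n) : rhoB n w n = n :=
  rhoB_eq_self (isBdry_top hw)

private lemma rhoB_stable {n : ℕ} {w : Perm ℤ} {k : ℕ} (h1 : 1 ≤ k)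
    (h : rhoB n w k ≠ rhoB n w (k-1)) : IsBdry n w k := by
  by_contra hnb
  obtain ⟨m, rfl⟩ : ∃ m, k = m + 1 := ⟨k - 1, by omega⟩
  refine h ?_
  rw [rhoB_succ hnb, Nat.add_sub_cancel]

private noncomputable def Qb (n : ℕ) (w : Perm ℤ) (k : ℕ) : ZMod 2 :=
  (negUpTo w (rhoB n w k) : ZMod 2)

private noncomputable def chB (n : ℕ) (w : Perm ℤ) : ℕ :=
  ∑ k ∈ Finset.Icc 1 n, if Qb n w k = Qb n w (k-1) then 0 else 1

private lemma negUpTo_zero (w : Perm ℤ) : negUpTo w 0 = 0 := by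
  rw [negUpTo]
  rw [show Finset.Icc (1:ℤ) ((0:ℕ):ℤ) = ∅ from Finset.Icc_eq_empty (by norm_num)]
  simp

private lemma Qb_zero (n : ℕ) (w : Perm ℤ) : Qb n w 0 = 0 := by
  rw [Qb, rhoB_zero, negUpTo_zero]
  rfl

private lemma oB_eq_chB {n : ℕ} {w : Perm ℤ} (hw : w ∈ BGroup n) : oB n w = chB n w := by
  have hset : {k : ℕ | 1 ≤ k ∧ IsBdry n w k ∧ ∃ k' < k, IsBdry n w k' ∧
      (∀ m : ℕ, k' < m → m < k → ¬ IsBdry n w m) ∧ negUpTo w k % 2 ≠ negUpTo w k' % 2}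
      = ↑((Finset.Icc 1 n).filter (fun k => ¬ (Qb n w k = Qb n w (k-1)))) := by
    ext k
    simp only [Set.mem_setOf_eq, Finset.coe_filter, Finset.mem_Icc]
    constructor
    · rintro ⟨hk1, hkb, k', hk'k, hk'b, hbet, hpar⟩
      refine ⟨⟨hk1, hkb.1⟩, ?_⟩
      have hk'r : k' = rhoB n w (k-1) := by
        have ha : k' ≤ rhoB n w (k-1) := le_rhoB hk'b (by omega)
        have hb : rhoB n w (k-1) ≤ k - 1 := rhoB_le n w (k-1)
        rcases eq_or_lt_of_le ha with he | hlt
        · exact he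
        · exact absurd (rhoB_bdry n w (k-1)) (hbet _ hlt (by omega))
      rw [Qb, Qb, rhoB_eq_self hkb, ← hk'r]
      intro he
      exact hpar ((ZMod.natCast_eq_natCast_iff' _ _ 2).1 he)
    · rintro ⟨⟨hk1, hkn⟩, hne⟩
      have hkb : IsBdry n w k := rhoB_stable hk1 (fun he => hne (by rw [Qb, Qb, he]))
      refine ⟨hk1, hkb, rhoB n w (k-1), (rhoB_le n w (k-1)).trans_lt (by omega),
        rhoB_bdry n w (k-1), ?_, ?_⟩
      · intro m hm1 hm2 hmb
        exact absurd (le_rhoB (k := k-1) hmb (by omega)) (by omega)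
      · intro he
        exact hne (by rw [Qb, Qb, rhoB_eq_self hkb]; exact (ZMod.natCast_eq_natCast_iff' _ _ 2).2 he)
  rw [oB, hset, Set.ncard_coe_finset, chB, Finset.card_filter]
  exact Finset.sum_congr rfl fun k _ => by by_cases h : Qb n w k = Qb n w (k-1) <;> simp [h]

private lemma zmod_sub_ind : ∀ a b : ZMod 2, (if a = b then (0 : ZMod 2) else 1) = a - b := by
  decide

private lemma chB_parity {n : ℕ} {w : Perm ℤ} (hw : w ∈ BGroup n) :
    ((chB n w : ℕ) : ZMod 2) = ((negB n w : ℕ) : ZMod 2) := by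
  have tele : ∀ m : ℕ, (∑ k ∈ Finset.Icc 1 m, ((if Qb n w k = Qb n w (k-1) then 0 else 1) : ZMod 2))
      = Qb n w m - Qb n w 0 := by
    intro m
    induction m with
    | zero => simp
    | succ l ih =>
      rw [Finset.sum_Icc_succ_top (Nat.succ_le_succ (Nat.zero_le l)), ih]
      simp only [Nat.add_sub_cancel]
      rw [zmod_sub_ind]
      ring
  have hc : ((chB n w : ℕ) : ZMod 2) = Qb n w n - Qb n w 0 := by
    rw [chB, Nat.cast_sum, ← tele n]
    exact Finset.sum_congr rfl fun k _ => by split_ifs <;> simp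
  have h1 : Qb n w n = ((negB n w : ℕ) : ZMod 2) := by rw [Qb, rhoB_top hw]; rfl
  rw [hc, h1, Qb_zero, sub_zero]

private lemma oB_negB_even {n : ℕ} {w : Perm ℤ} (hw : w ∈ BGroup n) :
    ∃ c : ℤ, (oB n w : ℤ) - (negB n w : ℤ) = 2 * c := by
  have h := chB_parity hw
  rw [← oB_eq_chB hw] at h
  have h2 : (((oB n w : ℤ) - (negB n w : ℤ) : ℤ) : ZMod 2) = 0 := by
    push_cast
    rw [h]
    ring
  obtain ⟨c, hc⟩ := (ZMod.intCast_zmod_eq_zero_iff_dvd _ 2).1 h2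
  exact ⟨c, hc⟩

-- ============ abstract run bound and sum helpers ============

private lemma run_step : ∀ x y u v : ZMod 2,
    (if x = y then (0:ℤ) else 1) - (if u = v then 0 else 1)
      ≤ 2 * (if x ≠ u ∧ y = v ∧ x ≠ y then (1:ℤ) else 0)
        - (if x = u then 0 else 1) + (if y = v then 0 else 1) := by decide

private lemma run_bound (q₁ q₂ : ℕ → ZMod 2) (h0 : q₁ 0 = q₂ 0) (n : ℕ) :
    (∑ k ∈ Finset.Icc 1 n, if q₁ k = q₁ (k-1) then (0:ℤ) else 1)
      ≤ (∑ k ∈ Finset.Icc 1 n, if q₂ k = q₂ (k-1) then (0:ℤ) else 1)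
        + 2 * (∑ k ∈ Finset.Icc 1 n,
            if q₁ k ≠ q₂ k ∧ q₁ (k-1) = q₂ (k-1) ∧ q₁ k ≠ q₁ (k-1) then (1:ℤ) else 0)
        - (if q₁ n = q₂ n then 0 else 1) := by
  induction n with
  | zero => simp [h0]
  | succ m ih =>
    rw [Finset.sum_Icc_succ_top (Nat.succ_le_succ (Nat.zero_le m)),
        Finset.sum_Icc_succ_top (Nat.succ_le_succ (Nat.zero_le m)),
        Finset.sum_Icc_succ_top (Nat.succ_le_succ (Nat.zero_le m))]
    simp only [Nat.add_sub_cancel]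
    have hs := run_step (q₁ (m+1)) (q₁ m) (q₂ (m+1)) (q₂ m)
    linarith [ih, hs]

private lemma zmod2_tri : ∀ A B C D : ZMod 2,
    (if A + C = B + D then (0:ℤ) else 1)
      ≤ (if A = B then (0:ℤ) else 1) + (if C = D then (0:ℤ) else 1) := by decide

private lemma zmod2_mid : ∀ nv nw x y : ZMod 2, nv + x = nw + y → nw = nv + (y + x) := by decide

private lemma zmod2_high : ∀ nv nw a b c d : ZMod 2,
    nv + (c + d) = nw + (a + b) → a + b = c + d → nw = nv := by decide

private lemma sum_eq_one {s : Finset ℤ} {x : ℤ} (hx : x ∈ s) (F G : ℤ → ℤ)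
    (h : ∀ z ∈ s, z ≠ x → F z = G z) :
    (∑ z ∈ s, F z) + G x = (∑ z ∈ s, G z) + F x := by
  classical
  rw [← Finset.insert_erase hx, Finset.sum_insert (Finset.notMem_erase x s),
      Finset.sum_insert (Finset.notMem_erase x s)]
  have he : ∑ z ∈ s.erase x, F z = ∑ z ∈ s.erase x, G z :=
    Finset.sum_congr rfl fun z hz =>
      h z (Finset.mem_of_mem_erase hz) (Finset.ne_of_mem_erase hz)
  rw [he]
  ring

private lemma sum_eq_two {s : Finset ℤ} {x y : ℤ} (hx : x ∈ s) (hy : y ∈ s) (hxy : x ≠ y)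
    (F G : ℤ → ℤ) (h : ∀ z ∈ s, z ≠ x → z ≠ y → F z = G z) :
    (∑ z ∈ s, F z) + (G x + G y) = (∑ z ∈ s, G z) + (F x + F y) := by
  classical
  have hy' : y ∈ s.erase x := Finset.mem_erase.2 ⟨fun hh => hxy hh.symm, hy⟩
  rw [← Finset.insert_erase hx, Finset.sum_insert (Finset.notMem_erase x s),
      Finset.sum_insert (Finset.notMem_erase x s),
      ← Finset.insert_erase hy', Finset.sum_insert (Finset.notMem_erase y _),
      Finset.sum_insert (Finset.notMem_erase y _)]
  have he : ∑ z ∈ (s.erase x).erase y, F z = ∑ z ∈ (s.erase x).erase y, G z :=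
    Finset.sum_congr rfl fun z hz =>
      h z (Finset.mem_of_mem_erase (Finset.mem_of_mem_erase hz))
        (Finset.ne_of_mem_erase (Finset.mem_of_mem_erase hz)) (Finset.ne_of_mem_erase hz)
  rw [he]
  ring

private lemma negUpTo_cast (u : Perm ℤ) (m : ℕ) :
    (negUpTo u m : ℤ) = ∑ z ∈ Finset.Icc (1:ℤ) (m:ℤ), if u z < 0 then (1:ℤ) else 0 := by
  rw [negUpTo, Finset.card_filter]
  push_cast
  exact Finset.sum_congr rfl fun z _ => by split_ifs <;> simp

private lemma negB_cast (n : ℕ) (u : Perm ℤ) :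
    (negB n u : ℤ) = ∑ z ∈ Finset.Icc (1:ℤ) (n:ℤ), if u z < 0 then (1:ℤ) else 0 := by
  rw [negB, negSet, Finset.card_filter]
  push_cast
  exact Finset.sum_congr rfl fun z _ => by split_ifs <;> simp

private lemma chB_cast (n : ℕ) (w : Perm ℤ) :
    ((chB n w : ℕ) : ℤ) = ∑ k ∈ Finset.Icc 1 n, if Qb n w k = Qb n w (k-1) then (0:ℤ) else 1 := by
  rw [chB, Nat.cast_sum]
  exact Finset.sum_congr rfl fun k _ => by split_ifs <;> simp

private lemma sum_ite_card {α : Type*} (s : Finset α) (P : α → Prop) [DecidablePred P] :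
    (∑ k ∈ s, if P k then (1:ℤ) else 0) = (((s.filter P).card : ℕ) : ℤ) := by
  rw [Finset.card_filter]
  push_cast
  exact Finset.sum_congr rfl fun k _ => by split_ifs <;> simp

private lemma sum_ite_not_card {α : Type*} (s : Finset α) (P : α → Prop) [DecidablePred P] :
    (∑ k ∈ s, if P k then (0:ℤ) else 1) = (((s.filter (fun k => ¬ P k)).card : ℕ) : ℤ) := by
  rw [Finset.card_filter]
  push_cast
  exact Finset.sum_congr rfl fun k _ => by split_ifs <;> simp_all


private lemma csum_cast (n : ℕ) (u : Perm ℤ) :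
    excSum n u + negAbsSum n u
      = ∑ z ∈ Finset.Icc (1:ℤ) (n:ℤ),
          ((if z < u z then u z - z else 0) + (if u z < 0 then -(u z) else 0)) := by
  rw [excSum, negAbsSum, Finset.sum_filter, Finset.sum_filter, ← Finset.sum_add_distrib]
  refine Finset.sum_congr rfl fun z _ => ?_
  by_cases h : u z < 0 <;> simp [h, abs_of_neg]

private structure Ctx (n : ℕ) (w v : Perm ℤ) (i j : ℤ) : Prop where
  hw : w ∈ BGroup n
  hv : v ∈ BGroup n
  hi : 1 ≤ i
  hij : i < j
  hjn : j ≤ (n : ℤ)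
  agree : ∀ x : ℤ, 1 ≤ x → x ≠ i → x ≠ j → v x = w x
  habsi : |v i| = |w j|
  habsj : |v j| = |w i|
  hsh : ((if v i < 0 then 1 else 0) + (if v j < 0 then 1 else 0) : ZMod 2)
      = (if w i < 0 then 1 else 0) + (if w j < 0 then 1 else 0)

private lemma bdry_low {n : ℕ} {w v : Perm ℤ} {i j : ℤ} (hc : Ctx n w v i j) {k : ℕ}
    (hk : (k:ℤ) < i) : (IsBdry n w k ↔ IsBdry n v k) := by
  obtain ⟨hw, hv, hi, hij, hjn, hag, habi, habj, hsh⟩ := hc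
  constructor <;> rintro ⟨h1, h2⟩ <;> refine ⟨h1, fun x hx1 hx2 => ?_⟩
  · rw [hag x hx1 (by omega) (by omega)]
    exact h2 x hx1 hx2
  · rw [← hag x hx1 (by omega) (by omega)]
    exact h2 x hx1 hx2

private lemma bdry_high {n : ℕ} {w v : Perm ℤ} {i j : ℤ} (hc : Ctx n w v i j) {k : ℕ}
    (hk : j ≤ (k:ℤ)) : (IsBdry n w k ↔ IsBdry n v k) := by
  obtain ⟨hw, hv, hi, hij, hjn, hag, habi, habj, hsh⟩ := hc
  constructor <;> rintro ⟨h1, h2⟩ <;> refine ⟨h1, fun x hx1 hx2 => ?_⟩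
  · rcases eq_or_ne x i with rfl | hxi
    · rw [habi]; exact h2 j (by omega) (by omega)
    rcases eq_or_ne x j with rfl | hxj
    · rw [habj]; exact h2 i (by omega) (by omega)
    · rw [hag x hx1 hxi hxj]; exact h2 x hx1 hx2
  · rcases eq_or_ne x i with rfl | hxi
    · have h3 := h2 j (by omega) (by omega)
      rw [habj] at h3; exact h3
    rcases eq_or_ne x j with rfl | hxj
    · have h3 := h2 i (by omega) (by omega)
      rw [habi] at h3; exact h3
    · rw [← hag x hx1 hxi hxj]; exact h2 x hx1 hx2

private lemma negUpTo_low {n : ℕ} {w v : Perm ℤ} {i j : ℤ} (hc : Ctx n w v i j) {m : ℕ}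
    (hm : (m:ℤ) < i) : negUpTo v m = negUpTo w m := by
  rw [negUpTo, negUpTo]
  congr 1
  refine Finset.filter_congr fun z hz => ?_
  obtain ⟨hz1, hz2⟩ := Finset.mem_Icc.1 hz
  rw [hc.agree z hz1 (by omega) (by have := hc.hij; omega)]

private lemma negUpTo_mid {n : ℕ} {w v : Perm ℤ} {i j : ℤ} (hc : Ctx n w v i j) {m : ℕ}
    (hmi : i ≤ (m:ℤ)) (hmj : (m:ℤ) < j) :
    (negUpTo v m : ℤ) + (if w i < 0 then 1 else 0)
      = (negUpTo w m : ℤ) + (if v i < 0 then 1 else 0) := by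
  rw [negUpTo_cast, negUpTo_cast]
  refine sum_eq_one (Finset.mem_Icc.2 ⟨hc.hi, hmi⟩) (fun z => if v z < 0 then (1:ℤ) else 0)
    (fun z => if w z < 0 then (1:ℤ) else 0) fun z hz hzi => ?_
  obtain ⟨hz1, hz2⟩ := Finset.mem_Icc.1 hz
  rw [hc.agree z hz1 hzi (by omega)]

private lemma negUpTo_high {n : ℕ} {w v : Perm ℤ} {i j : ℤ} (hc : Ctx n w v i j) {m : ℕ}
    (hmj : j ≤ (m:ℤ)) :
    (negUpTo v m : ℤ) + ((if w i < 0 then 1 else 0) + (if w j < 0 then 1 else 0))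
      = (negUpTo w m : ℤ) + ((if v i < 0 then 1 else 0) + (if v j < 0 then 1 else 0)) := by
  rw [negUpTo_cast, negUpTo_cast]
  refine sum_eq_two (Finset.mem_Icc.2 ⟨hc.hi, by have := hc.hij; omega⟩)
    (Finset.mem_Icc.2 ⟨by have := hc.hi; have := hc.hij; omega, hmj⟩)
    (by have := hc.hij; omega) (fun z => if v z < 0 then (1:ℤ) else 0)
    (fun z => if w z < 0 then (1:ℤ) else 0) fun z hz hzi hzj => ?_
  obtain ⟨hz1, hz2⟩ := Finset.mem_Icc.1 hz
  rw [hc.agree z hz1 hzi hzj]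

private noncomputable def chi (n : ℕ) (w v : Perm ℤ) (i j : ℤ) (k : ℕ) : ZMod 2 :=
  if (i ≤ (rhoB n w k : ℤ) ∧ (rhoB n w k : ℤ) < j)
      ∧ (i ≤ (rhoB n v k : ℤ) ∧ (rhoB n v k : ℤ) < j)
  then (if v i < 0 then 1 else 0) + (if w i < 0 then 1 else 0) else 0

private lemma chi_zero {n : ℕ} {w v : Perm ℤ} {i j : ℤ} (hi : 1 ≤ i) :
    chi n w v i j 0 = 0 := by
  rw [chi, if_neg]
  rintro ⟨⟨h1, -⟩, -⟩
  rw [rhoB_zero] at h1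
  omega

private lemma Qb_agree {n : ℕ} {w v : Perm ℤ} {i j : ℤ} (hc : Ctx n w v i j) (k : ℕ)
    (hk : rhoB n w k = rhoB n v k) :
    Qb n w k = Qb n v k + chi n w v i j k := by
  rcases lt_or_ge ((rhoB n w k : ℕ) : ℤ) i with hmi | hmi
  · rw [Qb, Qb, ← hk, negUpTo_low hc hmi, chi, if_neg, add_zero]
    rintro ⟨⟨h1, -⟩, -⟩
    omega
  rcases lt_or_ge ((rhoB n w k : ℕ) : ℤ) j with hmj | hmj
  · have hm := negUpTo_mid hc hmi hmj
    have hz := congrArg (fun z : ℤ => (z : ZMod 2)) hm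
    simp only [Int.cast_add, Int.cast_natCast, apply_ite (fun z : ℤ => (z : ZMod 2)),
      Int.cast_one, Int.cast_zero] at hz
    rw [Qb, Qb, ← hk, chi, if_pos ⟨⟨hmi, hmj⟩, by rw [← hk]; exact ⟨hmi, hmj⟩⟩]
    exact zmod2_mid _ _ _ _ hz
  · have hm := negUpTo_high hc hmj
    have hz := congrArg (fun z : ℤ => (z : ZMod 2)) hm
    simp only [Int.cast_add, Int.cast_natCast, apply_ite (fun z : ℤ => (z : ZMod 2)),
      Int.cast_one, Int.cast_zero] at hz
    rw [Qb, Qb, ← hk, chi, if_neg, add_zero]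
    · exact zmod2_high _ _ _ _ _ _ hz hc.hsh
    · rintro ⟨⟨-, h2⟩, -⟩
      omega

private lemma S_subset {n : ℕ} {w v : Perm ℤ} {i j : ℤ} (hc : Ctx n w v i j) {k : ℕ}
    (hk1 : 1 ≤ k) (hkn : k ≤ n)
    (h1 : Qb n w k ≠ Qb n v k + chi n w v i j k)
    (h3 : Qb n w k ≠ Qb n w (k-1)) :
    max i |w i| ≤ (k:ℤ) ∧ (k:ℤ) ≤ min (j-1) (|w j|-1) := by
  have hbw : IsBdry n w k := rhoB_stable hk1 (fun he => h3 (by rw [Qb, Qb, he]))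
  have hbv : ¬ IsBdry n v k := by
    intro hvb
    exact h1 (Qb_agree hc k (by rw [rhoB_eq_self hbw, rhoB_eq_self hvb]))
  have hik : i ≤ (k:ℤ) := by
    by_contra h
    push_neg at h
    exact hbv ((bdry_low hc h).1 hbw)
  have hkj : (k:ℤ) < j := by
    by_contra h
    push_neg at h
    exact hbv ((bdry_high hc h).1 hbw)
  have hα : |w i| ≤ (k:ℤ) := hbw.2 i hc.hi hik
  have hβ : (k:ℤ) < |w j| := by
    rw [IsBdry, not_and] at hbv
    push_neg at hbv
    obtain ⟨x, hx1, hxk, hxv⟩ := hbv hkn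
    rcases eq_or_ne x i with rfl | hxi
    · rwa [hc.habsi] at hxv
    rcases eq_or_ne x j with rfl | hxj
    · omega
    · rw [hc.agree x hx1 hxi hxj] at hxv
      exact absurd (hbw.2 x hx1 hxk) (by omega)
  constructor
  · omega
  · omega

private lemma chi_changes {n : ℕ} {w v : Perm ℤ} {i j : ℤ} (hc : Ctx n w v i j) :
    (∑ k ∈ Finset.Icc 1 n, if chi n w v i j k = chi n w v i j (k-1) then (0:ℤ) else 1)
      ≤ if (((if v i < 0 then 1 else 0) + (if w i < 0 then 1 else 0) : ZMod 2) ≠ 0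
            ∧ |w i| ≤ j - 1 ∧ |w j| ≤ j - 1) then 2 else 0 := by
  set ε : ZMod 2 := (if v i < 0 then 1 else 0) + (if w i < 0 then 1 else 0) with hε
  set C : ℕ → Prop := fun k => (i ≤ (rhoB n w k : ℤ) ∧ (rhoB n w k : ℤ) < j)
      ∧ (i ≤ (rhoB n v k : ℤ) ∧ (rhoB n v k : ℤ) < j) with hC
  have hchi : ∀ k, chi n w v i j k = if C k then ε else 0 := fun k => rfl
  have hCprop : ∀ k, C k → (|w i| ≤ j - 1 ∧ |w j| ≤ j - 1 ∧ k < n) := by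
    intro k hk
    obtain ⟨⟨h1, h2⟩, h3, h4⟩ := hk
    have hbw := rhoB_bdry n w k
    have hbv := rhoB_bdry n v k
    have e1 : |w i| ≤ ((rhoB n w k : ℕ) : ℤ) := hbw.2 i hc.hi h1
    have e2 : |v i| ≤ ((rhoB n v k : ℕ) : ℤ) := hbv.2 i hc.hi h3
    rw [hc.habsi] at e2
    have hkn : k < n := by
      by_contra hkn
      push_neg at hkn
      have hh := rhoB_mono n w hkn
      rw [rhoB_top hc.hw] at hh
      have := hc.hjn
      omega
    exact ⟨by omega, by omega, hkn⟩
  by_cases hcond : (ε ≠ 0 ∧ |w i| ≤ j - 1 ∧ |w j| ≤ j - 1)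
  · rw [if_pos hcond]
    by_cases hem : ∃ m, m < n ∧ C m
    · obtain ⟨m0, hm0n, hm0⟩ := hem
      set Tf : Finset ℕ := (Finset.range n).filter C with hTf
      have hTne : Tf.Nonempty := ⟨m0, Finset.mem_filter.2 ⟨Finset.mem_range.2 hm0n, hm0⟩⟩
      have hkminC : C (Tf.min' hTne) := (Finset.mem_filter.1 (Tf.min'_mem hTne)).2
      have hkmaxC : C (Tf.max' hTne) := (Finset.mem_filter.1 (Tf.max'_mem hTne)).2
      have hconv : ∀ a b c : ℕ, C a → C c → a ≤ b → b ≤ c → C b := by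
        intro a b c ha hc' hab hbc
        obtain ⟨⟨a1, a2⟩, a3, a4⟩ := ha
        obtain ⟨⟨c1, c2⟩, c3, c4⟩ := hc'
        have m1 := rhoB_mono n w hab
        have m2 := rhoB_mono n w hbc
        have m3 := rhoB_mono n v hab
        have m4 := rhoB_mono n v hbc
        exact ⟨⟨by omega, by omega⟩, by omega, by omega⟩
      have hsub : (Finset.Icc 1 n).filter
            (fun k => ¬ (chi n w v i j k = chi n w v i j (k-1)))
          ⊆ {Tf.min' hTne, Tf.max' hTne + 1} := by
        intro k hk
        obtain ⟨hkI, hkne⟩ := Finset.mem_filter.1 hk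
        obtain ⟨hk1, hkn⟩ := Finset.mem_Icc.1 hkI
        by_cases h1 : C k <;> by_cases h2 : C (k-1)
        · exact absurd (by rw [hchi, hchi, if_pos h1, if_pos h2]) hkne
        · have hkT : k ∈ Tf := Finset.mem_filter.2 ⟨Finset.mem_range.2 (hCprop k h1).2.2, h1⟩
          have hle : Tf.min' hTne ≤ k := Finset.min'_le _ _ hkT
          have hnlt : ¬ Tf.min' hTne < k := by
            intro hlt
            exact h2 (hconv (Tf.min' hTne) (k-1) k hkminC h1 (by omega) (by omega))
          simp only [Finset.mem_insert, Finset.mem_singleton]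
          left
          omega
        · have hkT : k - 1 ∈ Tf :=
            Finset.mem_filter.2 ⟨Finset.mem_range.2 (hCprop (k-1) h2).2.2, h2⟩
          have hle : k - 1 ≤ Tf.max' hTne := Finset.le_max' _ _ hkT
          have hnle : ¬ k ≤ Tf.max' hTne := by
            intro hlt
            exact h1 (hconv (k-1) k (Tf.max' hTne) h2 hkmaxC (by omega) hlt)
          simp only [Finset.mem_insert, Finset.mem_singleton]
          right
          omega
        · exact absurd (by rw [hchi, hchi, if_neg h1, if_neg h2]) hkne
      have hcard : ((Finset.Icc 1 n).filter
          (fun k => ¬ (chi n w v i j k = chi n w v i j (k-1)))).card ≤ 2 := by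
        refine (Finset.card_le_card hsub).trans ?_
        refine (Finset.card_insert_le _ _).trans ?_
        simp
      have heq : (∑ k ∈ Finset.Icc 1 n, if chi n w v i j k = chi n w v i j (k-1) then (0:ℤ) else 1)
          = (((Finset.Icc 1 n).filter
              (fun k => ¬ (chi n w v i j k = chi n w v i j (k-1)))).card : ℤ) :=
        sum_ite_not_card _ _
      rw [heq]
      exact_mod_cast hcard
    · push_neg at hem
      have hz : ∀ k ∈ Finset.Icc 1 n,
          (if chi n w v i j k = chi n w v i j (k-1) then (0:ℤ) else 1) = 0 := by
        intro k _
        rw [if_pos]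
        have hnc : ∀ m, ¬ C m := fun m hm => (hem m (hCprop m hm).2.2) hm
        rw [hchi, hchi, if_neg (hnc k), if_neg (hnc (k-1))]
      rw [Finset.sum_eq_zero hz]
      norm_num
  · rw [if_neg hcond]
    have hz : ∀ k ∈ Finset.Icc 1 n,
        (if chi n w v i j k = chi n w v i j (k-1) then (0:ℤ) else 1) = 0 := by
      intro k _
      rw [if_pos]
      by_cases hek : ε = 0
      · rw [hchi, hchi]
        split_ifs <;> simp [hek]
      · have hnc : ∀ m, ¬ C m := by
          intro m hm
          obtain ⟨hA, hB, -⟩ := hCprop m hm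
          exact hcond ⟨hek, hA, hB⟩
        rw [hchi, hchi, if_neg (hnc k), if_neg (hnc (k-1))]
    rw [Finset.sum_eq_zero hz]

private lemma oB_master {n : ℕ} {w v : Perm ℤ} {i j : ℤ} (hc : Ctx n w v i j) :
    (oB n w : ℤ) ≤ (oB n v : ℤ)
      + 2 * ((min (j-1) (|w j|-1) + 1 - max i |w i|).toNat : ℤ)
      + (if (((if v i < 0 then 1 else 0) + (if w i < 0 then 1 else 0) : ZMod 2) ≠ 0
            ∧ |w i| ≤ j - 1 ∧ |w j| ≤ j - 1) then 2 else 0) := by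
  set q2 : ℕ → ZMod 2 := fun k => Qb n v k + chi n w v i j k with hq2
  have h0 : Qb n w 0 = q2 0 := by
    rw [hq2]
    simp only []
    rw [Qb_zero, Qb_zero, chi_zero hc.hi, add_zero]
  have hn : Qb n w n = q2 n :=
    Qb_agree hc n (by rw [rhoB_top hc.hw, rhoB_top hc.hv])
  have hrun := run_bound (Qb n w) q2 h0 n
  rw [if_pos hn, sub_zero] at hrun
  -- bound the S-sum
  have hSle : (∑ k ∈ Finset.Icc 1 n,
        if Qb n w k ≠ q2 k ∧ Qb n w (k-1) = q2 (k-1) ∧ Qb n w k ≠ Qb n w (k-1)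
        then (1:ℤ) else 0)
      ≤ ((min (j-1) (|w j|-1) + 1 - max i |w i|).toNat : ℤ) := by
    have heq : (∑ k ∈ Finset.Icc 1 n,
          if Qb n w k ≠ q2 k ∧ Qb n w (k-1) = q2 (k-1) ∧ Qb n w k ≠ Qb n w (k-1)
          then (1:ℤ) else 0)
        = (((Finset.Icc 1 n).filter (fun k =>
            Qb n w k ≠ q2 k ∧ Qb n w (k-1) = q2 (k-1) ∧ Qb n w k ≠ Qb n w (k-1))).card : ℤ) :=
      sum_ite_card _ _
    rw [heq]
    have hmap : (((Finset.Icc 1 n).filter (fun k =>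
          Qb n w k ≠ q2 k ∧ Qb n w (k-1) = q2 (k-1) ∧ Qb n w k ≠ Qb n w (k-1))).card : ℕ)
        ≤ (Finset.Icc (max i |w i|) (min (j-1) (|w j|-1))).card := by
      refine Finset.card_le_card_of_injOn (fun k => (k:ℤ)) ?_ ?_
      · intro k hk
        obtain ⟨hkI, hP⟩ := Finset.mem_filter.1 hk
        obtain ⟨hk1, hkn⟩ := Finset.mem_Icc.1 hkI
        exact Finset.mem_Icc.2 (S_subset hc hk1 hkn hP.1 hP.2.2)
      · intro a _ b _ hab
        exact Nat.cast_injective hab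
    calc (((Finset.Icc 1 n).filter (fun k =>
          Qb n w k ≠ q2 k ∧ Qb n w (k-1) = q2 (k-1) ∧ Qb n w k ≠ Qb n w (k-1))).card : ℤ)
        ≤ ((Finset.Icc (max i |w i|) (min (j-1) (|w j|-1))).card : ℤ) := by exact_mod_cast hmap
      _ = ((min (j-1) (|w j|-1) + 1 - max i |w i|).toNat : ℤ) := by rw [Int.card_Icc]
  have hq2le : (∑ k ∈ Finset.Icc 1 n, if q2 k = q2 (k-1) then (0:ℤ) else 1)
      ≤ (∑ k ∈ Finset.Icc 1 n, if Qb n v k = Qb n v (k-1) then (0:ℤ) else 1)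
        + (∑ k ∈ Finset.Icc 1 n, if chi n w v i j k = chi n w v i j (k-1) then (0:ℤ) else 1) := by
    rw [← Finset.sum_add_distrib]
    exact Finset.sum_le_sum fun k _ =>
      zmod2_tri (Qb n v k) (Qb n v (k-1)) (chi n w v i j k) (chi n w v i j (k-1))
  have hchi := chi_changes hc
  rw [oB_eq_chB hc.hw, oB_eq_chB hc.hv, chB_cast, chB_cast]
  linarith [hrun, hSle, hq2le, hchi]

private lemma csum_rel {n : ℕ} {w v : Perm ℤ} {i j : ℤ} (hc : Ctx n w v i j) :
    (excSum n w + negAbsSum n w)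
      + (((if i < v i then v i - i else 0) + (if v i < 0 then -(v i) else 0))
        + ((if j < v j then v j - j else 0) + (if v j < 0 then -(v j) else 0)))
    = (excSum n v + negAbsSum n v)
      + (((if i < w i then w i - i else 0) + (if w i < 0 then -(w i) else 0))
        + ((if j < w j then w j - j else 0) + (if w j < 0 then -(w j) else 0))) := by
  rw [csum_cast, csum_cast]
  refine sum_eq_two (Finset.mem_Icc.2 ⟨hc.hi, by have := hc.hij; have := hc.hjn; omega⟩)
    (Finset.mem_Icc.2 ⟨by have := hc.hi; have := hc.hij; omega, hc.hjn⟩)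
    (by have := hc.hij; omega)
    (fun z => (if z < w z then w z - z else 0) + (if w z < 0 then -(w z) else 0))
    (fun z => (if z < v z then v z - z else 0) + (if v z < 0 then -(v z) else 0))
    fun z hz hzi hzj => ?_
  obtain ⟨hz1, hz2⟩ := Finset.mem_Icc.1 hz
  rw [hc.agree z hz1 hzi hzj]

private lemma negB_rel {n : ℕ} {w v : Perm ℤ} {i j : ℤ} (hc : Ctx n w v i j) :
    (negB n w : ℤ) + ((if v i < 0 then (1:ℤ) else 0) + (if v j < 0 then (1:ℤ) else 0))
      = (negB n v : ℤ) + ((if w i < 0 then (1:ℤ) else 0) + (if w j < 0 then (1:ℤ) else 0)) := by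
  rw [negB_cast, negB_cast]
  refine sum_eq_two (Finset.mem_Icc.2 ⟨hc.hi, by have := hc.hij; have := hc.hjn; omega⟩)
    (Finset.mem_Icc.2 ⟨by have := hc.hi; have := hc.hij; omega, hc.hjn⟩)
    (by have := hc.hij; omega)
    (fun z => if w z < 0 then (1:ℤ) else 0)
    (fun z => if v z < 0 then (1:ℤ) else 0)
    fun z hz hzi hzj => ?_
  obtain ⟨hz1, hz2⟩ := Finset.mem_Icc.1 hz
  rw [hc.agree z hz1 hzi hzj]

private lemma t1_mem {n : ℕ} {i j : ℤ} (hi : 1 ≤ i) (hij : i < j) (hjn : j ≤ (n:ℤ)) :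
    (Equiv.swap i j * Equiv.swap (-i) (-j)) ∈ BGroup n := by
  have h : IsSignedPerm n (Equiv.swap i j * Equiv.swap (-i) (-j)) := by
    constructor
    · intro x
      simp only [Perm.mul_apply, Equiv.swap_apply_def]
      split_ifs <;> omega
    · intro x hx
      rw [lt_abs] at hx
      simp only [Perm.mul_apply, Equiv.swap_apply_def]
      split_ifs <;> omega
  exact h

private lemma t2_mem {n : ℕ} {i j : ℤ} (hi : 1 ≤ i) (hij : i < j) (hjn : j ≤ (n:ℤ)) :
    (Equiv.swap (-i) j * Equiv.swap i (-j)) ∈ BGroup n := by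
  have h : IsSignedPerm n (Equiv.swap (-i) j * Equiv.swap i (-j)) := by
    constructor
    · intro x
      simp only [Perm.mul_apply, Equiv.swap_apply_def]
      split_ifs <;> omega
    · intro x hx
      rw [lt_abs] at hx
      simp only [Perm.mul_apply, Equiv.swap_apply_def]
      split_ifs <;> omega
  exact h

private lemma t3_mem {n : ℕ} {i : ℤ} (hi : 1 ≤ i) (hin : i ≤ (n:ℤ)) :
    (Equiv.swap (-i) i) ∈ BGroup n := by
  have h : IsSignedPerm n (Equiv.swap (-i) i) := by
    constructor
    · intro x
      simp only [Equiv.swap_apply_def]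
      split_ifs <;> omega
    · intro x hx
      rw [lt_abs] at hx
      simp only [Equiv.swap_apply_def]
      split_ifs <;> omega
  exact h

private lemma ite_cond_mono {P Q : Prop} [Decidable P] [Decidable Q] (h : P → Q) :
    (if P then (2:ℤ) else 0) ≤ (if Q then 2 else 0) := by
  by_cases hP : P <;> by_cases hQ : Q <;> simp [hP, hQ]
  exact absurd (h hP) hQ

set_option maxHeartbeats 3000000 in
private lemma case1 {n : ℕ} {w : Perm ℤ} (hw : w ∈ BGroup n) {i j : ℤ}
    (hi : 1 ≤ i) (hij : i < j) (hjn : j ≤ (n:ℤ)) :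
    dFormB n w - (j - i) ≤ dFormB n (w * (Equiv.swap i j * Equiv.swap (-i) (-j))) := by
  set v := w * (Equiv.swap i j * Equiv.swap (-i) (-j)) with hvdef
  have hvB : v ∈ BGroup n := mul_mem hw (t1_mem hi hij hjn)
  have hvi : v i = w j := by
    rw [hvdef]
    simp only [Perm.mul_apply]
    rw [show (Equiv.swap (-i) (-j)) i = i from Equiv.swap_apply_of_ne_of_ne (by omega) (by omega),
        Equiv.swap_apply_left]
  have hvj : v j = w i := by
    rw [hvdef]
    simp only [Perm.mul_apply]
    rw [show (Equiv.swap (-i) (-j)) j = j from Equiv.swap_apply_of_ne_of_ne (by omega) (by omega),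
        Equiv.swap_apply_right]
  have hag : ∀ x : ℤ, 1 ≤ x → x ≠ i → x ≠ j → v x = w x := by
    intro x hx hxi hxj
    rw [hvdef]
    simp only [Perm.mul_apply]
    rw [show (Equiv.swap (-i) (-j)) x = x from Equiv.swap_apply_of_ne_of_ne (by omega) (by omega),
        Equiv.swap_apply_of_ne_of_ne hxi hxj]
  have hc : Ctx n w v i j :=
    ⟨hw, hvB, hi, hij, hjn, hag, by rw [hvi], by rw [hvj], by rw [hvi, hvj, add_comm]⟩
  have hM := oB_master hc
  have hcs := csum_rel hc
  have hnb := negB_rel hc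
  obtain ⟨cw, hcw⟩ := oB_negB_even hw
  obtain ⟨cv, hcv⟩ := oB_negB_even hvB
  simp only [dFormB]
  rw [hcw, hcv, Int.mul_ediv_cancel_left _ two_ne_zero, Int.mul_ediv_cancel_left _ two_ne_zero]
  rw [hvi, hvj] at hcs hnb
  rw [hvi] at hM
  have hia : w i ≠ 0 := bg_ne_zero hw (by omega)
  have hib : w j ≠ 0 := bg_ne_zero hw (by omega)
  rcases hia.lt_or_gt with ha | ha <;> rcases hib.lt_or_gt with hb | hb
  · -- w i < 0, w j < 0 : no flip
    rw [if_neg (fun hcon => hcon.1 (by rw [if_pos hb, if_pos ha]; decide))] at hM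
    rw [abs_of_neg ha, abs_of_neg hb] at hM
    split_ifs at hcs hnb hM <;> omega
  · -- w i < 0, 0 < w j : flip
    replace hM : (oB n w : ℤ) ≤ (oB n v : ℤ)
        + 2 * ((min (j-1) (|w j|-1) + 1 - max i |w i|).toNat : ℤ)
        + (if |w i| ≤ j - 1 ∧ |w j| ≤ j - 1 then 2 else 0) := by
      have h2 := ite_cond_mono
        (P := (((if w j < 0 then 1 else 0) + (if w i < 0 then 1 else 0) : ZMod 2) ≠ 0
            ∧ |w i| ≤ j - 1 ∧ |w j| ≤ j - 1)) (Q := (|w i| ≤ j - 1 ∧ |w j| ≤ j - 1)) And.right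
      linarith [hM, h2]
    rw [abs_of_neg ha, abs_of_pos hb] at hM
    split_ifs at hcs hnb hM <;> omega
  · -- 0 < w i, w j < 0 : flip
    replace hM : (oB n w : ℤ) ≤ (oB n v : ℤ)
        + 2 * ((min (j-1) (|w j|-1) + 1 - max i |w i|).toNat : ℤ)
        + (if |w i| ≤ j - 1 ∧ |w j| ≤ j - 1 then 2 else 0) := by
      have h2 := ite_cond_mono
        (P := (((if w j < 0 then 1 else 0) + (if w i < 0 then 1 else 0) : ZMod 2) ≠ 0
            ∧ |w i| ≤ j - 1 ∧ |w j| ≤ j - 1)) (Q := (|w i| ≤ j - 1 ∧ |w j| ≤ j - 1)) And.right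
      linarith [hM, h2]
    rw [abs_of_pos ha, abs_of_neg hb] at hM
    split_ifs at hcs hnb hM <;> omega
  · -- 0 < w i, 0 < w j : no flip
    rw [if_neg (fun hcon => hcon.1
      (by rw [if_neg (by omega : ¬ w j < 0), if_neg (by omega : ¬ w i < 0)]; decide))] at hM
    rw [abs_of_pos ha, abs_of_pos hb] at hM
    split_ifs at hcs hnb hM <;> omega

set_option maxHeartbeats 3000000 in
private lemma case2 {n : ℕ} {w : Perm ℤ} (hw : w ∈ BGroup n) {i j : ℤ}
    (hi : 1 ≤ i) (hij : i < j) (hjn : j ≤ (n:ℤ)) :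
    dFormB n w - (i + j - 1) ≤ dFormB n (w * (Equiv.swap (-i) j * Equiv.swap i (-j))) := by
  set v := w * (Equiv.swap (-i) j * Equiv.swap i (-j)) with hvdef
  have hvB : v ∈ BGroup n := mul_mem hw (t2_mem hi hij hjn)
  have hvi : v i = -(w j) := by
    rw [hvdef]
    simp only [Perm.mul_apply]
    rw [Equiv.swap_apply_left,
        show (Equiv.swap (-i) j) (-j) = -j from Equiv.swap_apply_of_ne_of_ne (by omega) (by omega)]
    exact hw.1 j
  have hvj : v j = -(w i) := by
    rw [hvdef]
    simp only [Perm.mul_apply]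
    rw [show (Equiv.swap i (-j)) j = j from Equiv.swap_apply_of_ne_of_ne (by omega) (by omega),
        Equiv.swap_apply_right]
    exact hw.1 i
  have hag : ∀ x : ℤ, 1 ≤ x → x ≠ i → x ≠ j → v x = w x := by
    intro x hx hxi hxj
    rw [hvdef]
    simp only [Perm.mul_apply]
    rw [show (Equiv.swap i (-j)) x = x from Equiv.swap_apply_of_ne_of_ne hxi (by omega),
        Equiv.swap_apply_of_ne_of_ne (by omega) hxj]
  have hia : w i ≠ 0 := bg_ne_zero hw (by omega)
  have hib : w j ≠ 0 := bg_ne_zero hw (by omega)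
  have hshv : ((if v i < 0 then 1 else 0) + (if v j < 0 then 1 else 0) : ZMod 2)
      = (if w i < 0 then 1 else 0) + (if w j < 0 then 1 else 0) := by
    rw [hvi, hvj]
    rcases hia.lt_or_gt with ha | ha <;> rcases hib.lt_or_gt with hb | hb
    · rw [if_neg (by omega : ¬ -(w j) < 0), if_neg (by omega : ¬ -(w i) < 0),
          if_pos ha, if_pos hb]
      decide
    · rw [if_pos (by omega : -(w j) < 0), if_neg (by omega : ¬ -(w i) < 0),
          if_pos ha, if_neg (by omega : ¬ w j < 0)]
    · rw [if_neg (by omega : ¬ -(w j) < 0), if_pos (by omega : -(w i) < 0),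
          if_neg (by omega : ¬ w i < 0), if_pos hb]
    · rw [if_pos (by omega : -(w j) < 0), if_pos (by omega : -(w i) < 0),
          if_neg (by omega : ¬ w i < 0), if_neg (by omega : ¬ w j < 0)]
      decide
  have hc : Ctx n w v i j :=
    ⟨hw, hvB, hi, hij, hjn, hag, by rw [hvi, abs_neg], by rw [hvj, abs_neg], hshv⟩
  have hM := oB_master hc
  have hcs := csum_rel hc
  have hnb := negB_rel hc
  obtain ⟨cw, hcw⟩ := oB_negB_even hw
  obtain ⟨cv, hcv⟩ := oB_negB_even hvB
  simp only [dFormB]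
  rw [hcw, hcv, Int.mul_ediv_cancel_left _ two_ne_zero, Int.mul_ediv_cancel_left _ two_ne_zero]
  rw [hvi, hvj] at hcs hnb
  rw [hvi] at hM
  rcases hia.lt_or_gt with ha | ha <;> rcases hib.lt_or_gt with hb | hb
  · -- w i < 0, w j < 0 : flip
    replace hM : (oB n w : ℤ) ≤ (oB n v : ℤ)
        + 2 * ((min (j-1) (|w j|-1) + 1 - max i |w i|).toNat : ℤ)
        + (if |w i| ≤ j - 1 ∧ |w j| ≤ j - 1 then 2 else 0) := by
      have h2 := ite_cond_mono
        (P := (((if -(w j) < 0 then 1 else 0) + (if w i < 0 then 1 else 0) : ZMod 2) ≠ 0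
            ∧ |w i| ≤ j - 1 ∧ |w j| ≤ j - 1)) (Q := (|w i| ≤ j - 1 ∧ |w j| ≤ j - 1)) And.right
      linarith [hM, h2]
    rw [abs_of_neg ha, abs_of_neg hb] at hM
    split_ifs at hcs hnb hM <;> omega
  · -- w i < 0, 0 < w j : no flip
    rw [if_neg (fun hcon => hcon.1
      (by rw [if_pos (by omega : -(w j) < 0), if_pos ha]; decide))] at hM
    rw [abs_of_neg ha, abs_of_pos hb] at hM
    split_ifs at hcs hnb hM <;> omega
  · -- 0 < w i, w j < 0 : no flip
    rw [if_neg (fun hcon => hcon.1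
      (by rw [if_neg (by omega : ¬ -(w j) < 0), if_neg (by omega : ¬ w i < 0)]; decide))] at hM
    rw [abs_of_pos ha, abs_of_neg hb] at hM
    split_ifs at hcs hnb hM <;> omega
  · -- 0 < w i, 0 < w j : flip
    replace hM : (oB n w : ℤ) ≤ (oB n v : ℤ)
        + 2 * ((min (j-1) (|w j|-1) + 1 - max i |w i|).toNat : ℤ)
        + (if |w i| ≤ j - 1 ∧ |w j| ≤ j - 1 then 2 else 0) := by
      have h2 := ite_cond_mono
        (P := (((if -(w j) < 0 then 1 else 0) + (if w i < 0 then 1 else 0) : ZMod 2) ≠ 0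
            ∧ |w i| ≤ j - 1 ∧ |w j| ≤ j - 1)) (Q := (|w i| ≤ j - 1 ∧ |w j| ≤ j - 1)) And.right
      linarith [hM, h2]
    rw [abs_of_pos ha, abs_of_pos hb] at hM
    split_ifs at hcs hnb hM <;> omega

set_option maxHeartbeats 1000000 in
private lemma case3 {n : ℕ} {w : Perm ℤ} (hw : w ∈ BGroup n) {i : ℤ}
    (hi : 1 ≤ i) (hin : i ≤ (n:ℤ)) :
    dFormB n w - i ≤ dFormB n (w * Equiv.swap (-i) i) := by
  set v := w * Equiv.swap (-i) i with hvdef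
  have hvB : v ∈ BGroup n := mul_mem hw (t3_mem hi hin)
  have hvi : v i = -(w i) := by
    rw [hvdef]
    simp only [Perm.mul_apply]
    rw [Equiv.swap_apply_right]
    exact hw.1 i
  have hag : ∀ x : ℤ, 1 ≤ x → x ≠ i → v x = w x := by
    intro x hx hxi
    rw [hvdef]
    simp only [Perm.mul_apply]
    rw [Equiv.swap_apply_of_ne_of_ne (by omega) hxi]
  have hBd : ∀ k : ℕ, IsBdry n w k ↔ IsBdry n v k := by
    intro k
    constructor <;> rintro ⟨h1, h2⟩ <;> refine ⟨h1, fun x hx1 hx2 => ?_⟩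
    · rcases eq_or_ne x i with rfl | hxi
      · rw [hvi, abs_neg]; exact h2 x hx1 hx2
      · rw [hag x hx1 hxi]; exact h2 x hx1 hx2
    · rcases eq_or_ne x i with rfl | hxi
      · have h3 := h2 x hx1 hx2
        rwa [hvi, abs_neg] at h3
      · have h3 := h2 x hx1 hx2
        rwa [hag x hx1 hxi] at h3
  have hPeq : IsBdry n w = IsBdry n v := funext fun k => propext (hBd k)
  have hrho : ∀ k, rhoB n w k = rhoB n v k := by
    intro k
    unfold rhoB
    rw [hPeq]
  have hlow : ∀ m : ℕ, (m:ℤ) < i → negUpTo v m = negUpTo w m := by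
    intro m hm
    rw [negUpTo, negUpTo]
    congr 1
    refine Finset.filter_congr fun z hz => ?_
    obtain ⟨hz1, hz2⟩ := Finset.mem_Icc.1 hz
    rw [hag z hz1 (by omega)]
  have hmid : ∀ m : ℕ, i ≤ (m:ℤ) → (negUpTo v m : ℤ) + (if w i < 0 then 1 else 0)
      = (negUpTo w m : ℤ) + (if v i < 0 then 1 else 0) := by
    intro m hm
    rw [negUpTo_cast, negUpTo_cast]
    refine sum_eq_one (Finset.mem_Icc.2 ⟨hi, hm⟩) (fun z => if v z < 0 then (1:ℤ) else 0)
      (fun z => if w z < 0 then (1:ℤ) else 0) fun z hz hzi => ?_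
    obtain ⟨hz1, hz2⟩ := Finset.mem_Icc.1 hz
    rw [hag z hz1 hzi]
  have hine : w i ≠ 0 := bg_ne_zero hw (by omega)
  have hε : ((if v i < 0 then 1 else 0) + (if w i < 0 then 1 else 0) : ZMod 2) = 1 := by
    rw [hvi]
    rcases hine.lt_or_gt with h | h
    · rw [if_neg (by omega : ¬ -(w i) < 0), if_pos h]
      decide
    · rw [if_pos (by omega : -(w i) < 0), if_neg (by omega : ¬ w i < 0)]
      decide
  have hQ : ∀ k : ℕ, Qb n w k
      = Qb n v k + (if i ≤ ((rhoB n w k : ℕ) : ℤ) then (1:ZMod 2) else 0) := by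
    intro k
    rcases le_or_gt i ((rhoB n w k : ℕ) : ℤ) with hm | hm
    · rw [if_pos hm]
      have h1 := hmid (rhoB n w k) hm
      have hz := congrArg (fun z : ℤ => (z : ZMod 2)) h1
      simp only [Int.cast_add, Int.cast_natCast, apply_ite (fun z : ℤ => (z : ZMod 2)),
        Int.cast_one, Int.cast_zero] at hz
      rw [Qb, Qb, ← hrho k]
      rw [zmod2_mid _ _ _ _ hz, hε]
    · rw [if_neg (not_le.2 hm), add_zero, Qb, Qb, ← hrho k, hlow _ hm]
  have hchb : ((chB n w : ℕ) : ℤ) ≤ ((chB n v : ℕ) : ℤ) + 1 := by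
    have e1 : ((chB n w : ℕ) : ℤ) = ∑ k ∈ Finset.Icc 1 n,
        if (Qb n v k + (if i ≤ ((rhoB n w k : ℕ) : ℤ) then (1:ZMod 2) else 0))
          = (Qb n v (k-1) + (if i ≤ ((rhoB n w (k-1) : ℕ) : ℤ) then (1:ZMod 2) else 0))
        then (0:ℤ) else 1 := by
      rw [chB_cast]
      exact Finset.sum_congr rfl fun k _ => by rw [hQ k, hQ (k-1)]
    have e2 : (∑ k ∈ Finset.Icc 1 n,
        if (Qb n v k + (if i ≤ ((rhoB n w k : ℕ) : ℤ) then (1:ZMod 2) else 0))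
          = (Qb n v (k-1) + (if i ≤ ((rhoB n w (k-1) : ℕ) : ℤ) then (1:ZMod 2) else 0))
        then (0:ℤ) else 1)
        ≤ (∑ k ∈ Finset.Icc 1 n, if Qb n v k = Qb n v (k-1) then (0:ℤ) else 1)
          + (∑ k ∈ Finset.Icc 1 n,
              if (if i ≤ ((rhoB n w k : ℕ) : ℤ) then (1:ZMod 2) else 0)
                = (if i ≤ ((rhoB n w (k-1) : ℕ) : ℤ) then (1:ZMod 2) else 0)
              then (0:ℤ) else 1) := by
      rw [← Finset.sum_add_distrib]
      exact Finset.sum_le_sum fun k _ => zmod2_tri _ _ _ _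
    have e3 : (∑ k ∈ Finset.Icc 1 n,
        if (if i ≤ ((rhoB n w k : ℕ) : ℤ) then (1:ZMod 2) else 0)
          = (if i ≤ ((rhoB n w (k-1) : ℕ) : ℤ) then (1:ZMod 2) else 0)
        then (0:ℤ) else 1) ≤ 1 := by
      have heq : (∑ k ∈ Finset.Icc 1 n,
          if (if i ≤ ((rhoB n w k : ℕ) : ℤ) then (1:ZMod 2) else 0)
            = (if i ≤ ((rhoB n w (k-1) : ℕ) : ℤ) then (1:ZMod 2) else 0)
          then (0:ℤ) else 1)
          = (((Finset.Icc 1 n).filter (fun k =>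
              ¬ ((if i ≤ ((rhoB n w k : ℕ) : ℤ) then (1:ZMod 2) else 0)
                = (if i ≤ ((rhoB n w (k-1) : ℕ) : ℤ) then (1:ZMod 2) else 0)))).card : ℤ) :=
        sum_ite_not_card _ _
      rw [heq]
      have hkey : ∀ c ∈ (Finset.Icc 1 n).filter (fun k =>
          ¬ ((if i ≤ ((rhoB n w k : ℕ) : ℤ) then (1:ZMod 2) else 0)
            = (if i ≤ ((rhoB n w (k-1) : ℕ) : ℤ) then (1:ZMod 2) else 0))),
          (i ≤ ((rhoB n w c : ℕ) : ℤ) ∧ ¬ i ≤ ((rhoB n w (c-1) : ℕ) : ℤ)) := by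
        intro c hcm
        obtain ⟨hcI, hcne⟩ := Finset.mem_filter.1 hcm
        by_cases h1 : i ≤ ((rhoB n w c : ℕ) : ℤ) <;>
          by_cases h2 : i ≤ ((rhoB n w (c-1) : ℕ) : ℤ)
        · exact absurd (by rw [if_pos h1, if_pos h2]) hcne
        · exact ⟨h1, h2⟩
        · exact absurd (by
            have := rhoB_mono n w (show c - 1 ≤ c by omega)
            omega : i ≤ ((rhoB n w c : ℕ) : ℤ)) h1
        · exact absurd (by rw [if_neg h1, if_neg h2]) hcne
      have hcard : ((Finset.Icc 1 n).filter (fun k =>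
          ¬ ((if i ≤ ((rhoB n w k : ℕ) : ℤ) then (1:ZMod 2) else 0)
            = (if i ≤ ((rhoB n w (k-1) : ℕ) : ℤ) then (1:ZMod 2) else 0)))).card ≤ 1 := by
        rw [Finset.card_le_one]
        intro a ha b hb
        obtain ⟨a1, a2⟩ := hkey a ha
        obtain ⟨b1, b2⟩ := hkey b hb
        by_contra hab
        rcases Nat.lt_or_ge a b with h | h
        · have := rhoB_mono n w (show a ≤ b - 1 by omega)
          omega
        · have hba : b < a := by omega
          have := rhoB_mono n w (show b ≤ a - 1 by omega)
          omega
      exact_mod_cast hcard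
    linarith [e1.le.trans e2, e3, chB_cast n v]
  have hoB : (oB n w : ℤ) ≤ (oB n v : ℤ) + 1 := by
    rw [oB_eq_chB hw, oB_eq_chB hvB]
    exact hchb
  have hcs : (excSum n w + negAbsSum n w)
      + ((if i < v i then v i - i else 0) + (if v i < 0 then -(v i) else 0))
      = (excSum n v + negAbsSum n v)
      + ((if i < w i then w i - i else 0) + (if w i < 0 then -(w i) else 0)) := by
    rw [csum_cast, csum_cast]
    refine sum_eq_one (Finset.mem_Icc.2 ⟨hi, hin⟩)
      (fun z => (if z < w z then w z - z else 0) + (if w z < 0 then -(w z) else 0))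
      (fun z => (if z < v z then v z - z else 0) + (if v z < 0 then -(v z) else 0))
      fun z hz hzi => ?_
    obtain ⟨hz1, hz2⟩ := Finset.mem_Icc.1 hz
    rw [hag z hz1 hzi]
  have hnb : (negB n w : ℤ) + (if v i < 0 then (1:ℤ) else 0)
      = (negB n v : ℤ) + (if w i < 0 then (1:ℤ) else 0) := by
    rw [negB_cast, negB_cast]
    refine sum_eq_one (Finset.mem_Icc.2 ⟨hi, hin⟩)
      (fun z => if w z < 0 then (1:ℤ) else 0)
      (fun z => if v z < 0 then (1:ℤ) else 0)
      fun z hz hzi => ?_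
    obtain ⟨hz1, hz2⟩ := Finset.mem_Icc.1 hz
    rw [hag z hz1 hzi]
  obtain ⟨cw, hcw⟩ := oB_negB_even hw
  obtain ⟨cv, hcv⟩ := oB_negB_even hvB
  simp only [dFormB]
  rw [hcw, hcv, Int.mul_ediv_cancel_left _ two_ne_zero, Int.mul_ediv_cancel_left _ two_ne_zero]
  rw [hvi] at hcs hnb
  rcases hine.lt_or_gt with ha | ha <;> split_ifs at hcs hnb <;> omega


/-- **Lemma.** For every `w ∈ B_n` and every reflection `t` of `B_n` (of depth `d`),
`d(w) − dp(t) ≤ d(wt)`. -/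
theorem dForm_step_B (n : ℕ) (w : Equiv.Perm ℤ) (hw : w ∈ BGroup n)
    (t : Equiv.Perm ℤ) (d : ℤ) (ht : BReflDepth n t d) :
    dFormB n w - d ≤ dFormB n (w * t) := by
  rcases ht with ⟨i, j, hi, hij, hjn, rfl, rfl⟩ | ⟨i, j, hi, hij, hjn, rfl, rfl⟩ |
    ⟨i, hi, hin, rfl, rfl⟩
  · exact case1 hw hi hij hjn
  · exact case2 hw hi hij hjn
  · exact case3 hw hi hin
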